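/- The contraction map Φ : SL(2,ℂ) → M₂(ℂ), Φ(B) = U√(B*B - λI) (λ the smallest eigenvalue of B*B, U the unitary polar factor), is invariant-preserving: μ_R(Φ(B)) = i·Φ(B)*Φ(B) = i(B*B - λI) and the stabilizer of B under left and right SU(2)-multiplication is unchanged unless B*B = I. In particular Φ restricted to SU(2) ⊂ SL(2,ℂ) is constant equal to 0. -/

import Mathlib

/-!
Write `B = U Q` with `Q = √(BᴴB)`, and `Φ(B) = U P` with `P = √(BᴴB - λ)`. As `U` is unitary,
`Φᴴ Φ = P² = BᴴB - λ`. If `g B hᴴ = B` or `g Φ hᴴ = Φ` for unitary `g`, `h`, then `h` commutes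
with `BᴴB`, hence with `Q` and `P`, so `g B hᴴ = (g U hᴴ) Q` and `g Φ hᴴ = (g U hᴴ) P`. Since `Q` is
invertible, the first condition says `g U hᴴ = U`. Since `det (BᴴB) = 1` and `BᴴB ≠ 1`, `P ≠ 0`,
and as no element of `SU(2)` other than `1` fixes a nonzero matrix, the second condition says
the same. For `B ∈ SU(2)`, `BᴴB = 1`, so `λ = 1` and `P = 0`.
-/

open Matrix ComplexOrder

/-- The positive semidefinite square root of a positive semidefinite matrix
(the definition `Matrix.PosSemidef.sqrt` of the older Mathlib, since removed). -/
noncomputable def Matrix.PosSemidef.sqrt {n 𝕜 : Type*} [Fintype n] [DecidableEq n] [RCLike 𝕜]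
    {A : Matrix n n 𝕜} (hA : A.PosSemidef) : Matrix n n 𝕜 :=
  hA.1.eigenvectorUnitary.1 * diagonal ((↑) ∘ (√·) ∘ hA.1.eigenvalues) *
  (star hA.1.eigenvectorUnitary : Matrix n n 𝕜)

open scoped MatrixOrder

namespace Matrix

variable {n 𝕜 : Type*} [Fintype n] [DecidableEq n] [RCLike 𝕜]

namespace PosSemidef

variable {A : Matrix n n 𝕜} (hA : A.PosSemidef)

lemma sqrt_eq_cfcSqrt : hA.sqrt = CFC.sqrt A := by
  rw [CFC.sqrt_eq_cfc, cfc_nnreal_eq_real _ A hA.nonneg, hA.1.cfc_eq]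
  simp only [IsHermitian.cfc, PosSemidef.sqrt]
  congr 2
  ext i j
  simp only [diagonal_apply, Function.comp_apply, Real.coe_sqrt, Real.coe_toNNReal',
    max_eq_left (hA.eigenvalues_nonneg i)]

lemma posSemidef_sqrt : hA.sqrt.PosSemidef := by
  rw [hA.sqrt_eq_cfcSqrt]; exact (CFC.sqrt_nonneg A).posSemidef

lemma sqrt_mul_self : hA.sqrt * hA.sqrt = A := by
  rw [hA.sqrt_eq_cfcSqrt]; exact CFC.sqrt_mul_sqrt_self A hA.nonneg

lemma sqrt_eq_zero_iff : hA.sqrt = 0 ↔ A = 0 := by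
  rw [hA.sqrt_eq_cfcSqrt]; exact CFC.sqrt_eq_zero_iff A hA.nonneg

lemma conjTranspose_sqrt_mul_sqrt : hA.sqrtᴴ * hA.sqrt = A := by
  rw [hA.posSemidef_sqrt.1.eq, hA.sqrt_mul_self]

lemma unitary_conj_sqrt {u : Matrix n n 𝕜} (hu : u ∈ unitaryGroup n 𝕜) (huA : u * A * uᴴ = A) :
    u * hA.sqrt * uᴴ = hA.sqrt := by
  have huu : uᴴ * u = 1 := Unitary.star_mul_self_of_mem hu
  rw [hA.sqrt_eq_cfcSqrt, eq_comm, CFC.sqrt_eq_iff A _ hA.nonneg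
    (hA.sqrt_eq_cfcSqrt ▸ hA.posSemidef_sqrt.mul_mul_conjTranspose_same u).nonneg]
  calc u * CFC.sqrt A * uᴴ * (u * CFC.sqrt A * uᴴ)
      = u * (CFC.sqrt A * CFC.sqrt A) * uᴴ := by
        simp only [Matrix.mul_assoc, ← Matrix.mul_assoc uᴴ u, huu, Matrix.one_mul]
    _ = A := by rw [CFC.sqrt_mul_sqrt_self A hA.nonneg, huA]

end PosSemidef

section unitaryGroup

variable {g h u X : Matrix n n 𝕜}

lemma conjTranspose_mul_self_sandwich (hg : g ∈ unitaryGroup n 𝕜) :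
    (g * X * hᴴ)ᴴ * (g * X * hᴴ) = h * (Xᴴ * X) * hᴴ := by
  have hgg : gᴴ * g = 1 := Unitary.star_mul_self_of_mem hg
  simp only [conjTranspose_mul, conjTranspose_conjTranspose, Matrix.mul_assoc]
  rw [← Matrix.mul_assoc gᴴ g, hgg, Matrix.one_mul]

lemma conjTranspose_mul_self_unitary_mul (hu : u ∈ unitaryGroup n 𝕜) :
    (u * X)ᴴ * (u * X) = Xᴴ * X := by
  have huu : uᴴ * u = 1 := Unitary.star_mul_self_of_mem hu
  rw [conjTranspose_mul, Matrix.mul_assoc, ← Matrix.mul_assoc uᴴ, huu, Matrix.one_mul]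

lemma conj_conjTranspose_mul_self_of_sandwich_eq (hg : g ∈ unitaryGroup n 𝕜)
    (hX : g * X * hᴴ = X) : h * (Xᴴ * X) * hᴴ = Xᴴ * X := by
  rw [← conjTranspose_mul_self_sandwich hg, hX]

lemma sandwich_mul_of_conj_eq (hh : h ∈ unitaryGroup n 𝕜) (hX : h * X * hᴴ = X) :
    g * (u * X) * hᴴ = g * u * hᴴ * X := by
  have hhh : hᴴ * h = 1 := Unitary.star_mul_self_of_mem hh
  conv_rhs => rw [← hX]
  simp only [Matrix.mul_assoc, ← Matrix.mul_assoc hᴴ h, hhh, Matrix.one_mul]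

lemma conj_sub_smul_one_eq_iff (hh : h ∈ unitaryGroup n 𝕜) (c : 𝕜) :
    h * (X - c • 1) * hᴴ = X - c • 1 ↔ h * X * hᴴ = X := by
  have hhh : h * hᴴ = 1 := Unitary.mul_star_self_of_mem hh
  rw [Matrix.mul_sub, Matrix.sub_mul, Matrix.mul_smul, Matrix.smul_mul, Matrix.mul_one, hhh,
    sub_left_inj]

end unitaryGroup

lemma sub_smul_one_ne_zero_of_det_eq_one [Nonempty n] {A : Matrix n n 𝕜} {c : ℝ} (hc : 0 ≤ c)
    (hdet : A.det = 1) (hA1 : A ≠ 1) : A - (c : 𝕜) • 1 ≠ 0 := by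
  intro hAc
  rw [sub_eq_zero] at hAc
  have hc1 : c = 1 := by
    rw [hAc, det_smul, det_one, mul_one, ← RCLike.ofReal_pow, ← RCLike.ofReal_one,
      RCLike.ofReal_inj] at hdet
    exact (pow_eq_one_iff_of_nonneg hc Fintype.card_ne_zero).1 hdet
  exact hA1 (by rw [hAc, hc1, RCLike.ofReal_one, one_smul])

section specialUnitaryGroup

variable {V W U P : Matrix (Fin 2) (Fin 2) 𝕜}

lemma conjTranspose_eq_trace_smul_one_sub_fin_two (hV : V ∈ specialUnitaryGroup (Fin 2) 𝕜) :
    Vᴴ = V.trace • 1 - V := by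
  obtain ⟨hVu, hdet⟩ := mem_specialUnitaryGroup_iff.1 hV
  have hVV : V * Vᴴ = 1 := Unitary.mul_star_self_of_mem hVu
  calc Vᴴ = V.adjugate * V * Vᴴ := by rw [adjugate_mul, hdet, one_smul, Matrix.one_mul]
    _ = V.trace • 1 - V := by
      rw [Matrix.mul_assoc, hVV, Matrix.mul_one, adjugate_fin_two, trace_fin_two]
      ext i j
      fin_cases i <;> fin_cases j <;> simp

/-- `Vᴴ P = P` forces `tr V = 2`, and then `(V - 1)ᴴ (V - 1) = 2 - (V + Vᴴ) = 0`. -/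
lemma eq_one_of_mul_eq_self_fin_two (hV : V ∈ specialUnitaryGroup (Fin 2) 𝕜) (hP : P ≠ 0)
    (hVP : V * P = P) : V = 1 := by
  have hVu := (mem_specialUnitaryGroup_iff.1 hV).1
  have hVV : Vᴴ * V = 1 := Unitary.star_mul_self_of_mem hVu
  have hVP' : Vᴴ * P = P := by nth_rw 1 [← hVP]; rw [← Matrix.mul_assoc, hVV, Matrix.one_mul]
  have htr : V.trace = 2 := by
    rw [conjTranspose_eq_trace_smul_one_sub_fin_two hV, Matrix.sub_mul, Matrix.smul_mul,
      Matrix.one_mul, hVP, sub_eq_iff_eq_add, ← two_smul 𝕜 P, ← sub_eq_zero, ← sub_smul] at hVP'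
    exact sub_eq_zero.1 ((smul_eq_zero.1 hVP').resolve_right hP)
  rw [← sub_eq_zero, ← conjTranspose_mul_self_eq_zero]
  calc (V - 1)ᴴ * (V - 1) = Vᴴ * V + 1 - (Vᴴ + V) := by
        simp only [conjTranspose_sub, conjTranspose_one, Matrix.sub_mul, Matrix.mul_sub,
          Matrix.mul_one, Matrix.one_mul]; abel
    _ = 0 := by
      rw [hVV, conjTranspose_eq_trace_smul_one_sub_fin_two hV, htr, sub_add_cancel, two_smul,
        sub_self]

lemma mul_eq_mul_iff_of_ne_zero_fin_two (hW : W ∈ unitaryGroup (Fin 2) 𝕜)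
    (hU : U ∈ unitaryGroup (Fin 2) 𝕜) (hdet : W.det = U.det) (hP : P ≠ 0) :
    W * P = U * P ↔ W = U := by
  have hUU : Uᴴ * U = 1 := Unitary.star_mul_self_of_mem hU
  refine ⟨fun hWP => ?_, fun hWU => hWU ▸ rfl⟩
  have hV : Uᴴ * W ∈ specialUnitaryGroup (Fin 2) 𝕜 := by
    refine mem_specialUnitaryGroup_iff.2 ⟨Submonoid.mul_mem _ (Unitary.star_mem hU) hW, ?_⟩
    rw [det_mul, hdet, ← det_mul, hUU, det_one]
  have hV1 : Uᴴ * W = 1 := eq_one_of_mul_eq_self_fin_two hV hP <| by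
    rw [Matrix.mul_assoc, hWP, ← Matrix.mul_assoc, hUU, Matrix.one_mul]
  have hUU' : U * Uᴴ = 1 := Unitary.mul_star_self_of_mem hU
  calc W = U * (Uᴴ * W) := by rw [← Matrix.mul_assoc, hUU', Matrix.one_mul]
    _ = U := by rw [hV1, Matrix.mul_one]

lemma sandwich_eq_self_iff_of_polar {B U : Matrix (Fin 2) (Fin 2) 𝕜} {c : 𝕜}
    (hS : (Bᴴ * B).PosSemidef) (hM : (Bᴴ * B - c • 1).PosSemidef) (hQ : IsUnit hS.sqrt)
    (hP : hM.sqrt ≠ 0) (hU : U ∈ unitaryGroup (Fin 2) 𝕜) (hpolar : B = U * hS.sqrt)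
    {g h : Matrix (Fin 2) (Fin 2) 𝕜} (hg : g ∈ specialUnitaryGroup (Fin 2) 𝕜)
    (hh : h ∈ specialUnitaryGroup (Fin 2) 𝕜) :
    g * B * hᴴ = B ↔ g * (U * hM.sqrt) * hᴴ = U * hM.sqrt := by
  obtain ⟨hgu, hgdet⟩ := mem_specialUnitaryGroup_iff.1 hg
  obtain ⟨hhu, hhdet⟩ := mem_specialUnitaryGroup_iff.1 hh
  have hMh : h * (Bᴴ * B - c • 1) * hᴴ = Bᴴ * B - c • 1 ↔ h * (Bᴴ * B) * hᴴ = Bᴴ * B :=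
    conj_sub_smul_one_eq_iff hhu c
  suffices h * (Bᴴ * B) * hᴴ = Bᴴ * B →
      (g * B * hᴴ = B ↔ g * (U * hM.sqrt) * hᴴ = U * hM.sqrt) by
    refine ⟨fun e => (this (conj_conjTranspose_mul_self_of_sandwich_eq hgu e)).1 e,
      fun e => (this (hMh.1 ?_)).2 e⟩
    have hΦ : (U * hM.sqrt)ᴴ * (U * hM.sqrt) = Bᴴ * B - c • 1 := by
      rw [conjTranspose_mul_self_unitary_mul hU, hM.conjTranspose_sqrt_mul_sqrt]
    rw [← hΦ]
    exact conj_conjTranspose_mul_self_of_sandwich_eq hgu e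
  intro hSh
  have hW : g * U * hᴴ ∈ unitaryGroup (Fin 2) 𝕜 :=
    Submonoid.mul_mem _ (Submonoid.mul_mem _ hgu hU) (Unitary.star_mem hhu)
  have hWdet : (g * U * hᴴ).det = U.det := by
    rw [det_mul, det_mul, det_conjTranspose, hgdet, hhdet, star_one, one_mul, mul_one]
  conv_lhs => rw [hpolar]
  rw [sandwich_mul_of_conj_eq hhu (hS.unitary_conj_sqrt hhu hSh),
    sandwich_mul_of_conj_eq hhu (hM.unitary_conj_sqrt hhu (hMh.2 hSh)), hQ.mul_left_inj,
    mul_eq_mul_iff_of_ne_zero_fin_two hW hU hWdet hP]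

end specialUnitaryGroup

end Matrix

theorem stmt10_general (B : Matrix (Fin 2) (Fin 2) ℂ) (hB : B.det = 1) (lam : ℝ)
    (hex : ∃ i, (Matrix.posSemidef_conjTranspose_mul_self B).1.eigenvalues i = lam)
    (hpsd : (Bᴴ * B - (lam : ℂ) • (1 : Matrix (Fin 2) (Fin 2) ℂ)).PosSemidef)
    (U : Matrix (Fin 2) (Fin 2) ℂ) (hU : U ∈ Matrix.unitaryGroup (Fin 2) ℂ)
    (hpolar : B = U * (Matrix.posSemidef_conjTranspose_mul_self B).sqrt) :
    (Complex.I • ((U * hpsd.sqrt)ᴴ * (U * hpsd.sqrt))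
        = Complex.I • (Bᴴ * B - (lam : ℂ) • (1 : Matrix (Fin 2) (Fin 2) ℂ))) ∧
    (∀ g h : Matrix (Fin 2) (Fin 2) ℂ,
      g ∈ Matrix.unitaryGroup (Fin 2) ℂ → h ∈ Matrix.unitaryGroup (Fin 2) ℂ →
      g.det = 1 → h.det = 1 → Bᴴ * B ≠ 1 →
      (g * B * hᴴ = B ↔ g * (U * hpsd.sqrt) * hᴴ = U * hpsd.sqrt)) ∧
    (B ∈ Matrix.unitaryGroup (Fin 2) ℂ → U * hpsd.sqrt = 0) := by
  have hS := posSemidef_conjTranspose_mul_self B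
  obtain ⟨i, hi⟩ := hex
  have hdetS : (Bᴴ * B).det = 1 := by rw [det_mul, det_conjTranspose, hB, star_one, one_mul]
  refine ⟨by rw [conjTranspose_mul_self_unitary_mul hU, hpsd.conjTranspose_sqrt_mul_sqrt],
    fun g h hg hh hgdet hhdet hS1 => ?_, fun hBU => ?_⟩
  · have hQ : IsUnit hS.sqrt := by
      refine isUnit_of_mul_isUnit_left (y := hS.sqrt) ?_
      rw [hS.sqrt_mul_self, isUnit_iff_isUnit_det, hdetS]
      exact isUnit_one
    have hP : hpsd.sqrt ≠ 0 := hpsd.sqrt_eq_zero_iff.not.2 <|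
      sub_smul_one_ne_zero_of_det_eq_one (hi ▸ hS.eigenvalues_nonneg i) hdetS hS1
    exact sandwich_eq_self_iff_of_polar hS hpsd hQ hP hU hpolar
      (mem_specialUnitaryGroup_iff.2 ⟨hg, hgdet⟩) (mem_specialUnitaryGroup_iff.2 ⟨hh, hhdet⟩)
  · have hS1 : Bᴴ * B = 1 := Unitary.star_mul_self_of_mem hBU
    have hlam : lam = 1 := by
      have := hS.1.eigenvalues_mem_spectrum_real i
      rwa [hi, hS1, spectrum.one_eq, Set.mem_singleton_iff] at this
    rw [hpsd.sqrt_eq_zero_iff.2 (by rw [hS1, hlam, Complex.ofReal_one, one_smul, sub_self]),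
      Matrix.mul_zero]

theorem stmt10 (B : Matrix (Fin 2) (Fin 2) ℂ) (hB : B.det = 1) (lam : ℝ)
    (hmin : ∀ i, lam ≤ (Matrix.posSemidef_conjTranspose_mul_self B).1.eigenvalues i)
    (hex : ∃ i, (Matrix.posSemidef_conjTranspose_mul_self B).1.eigenvalues i = lam)
    (hpsd : (Bᴴ * B - (lam : ℂ) • (1 : Matrix (Fin 2) (Fin 2) ℂ)).PosSemidef)
    (U : Matrix (Fin 2) (Fin 2) ℂ) (hU : U ∈ Matrix.unitaryGroup (Fin 2) ℂ)
    (hpolar : B = U * (Matrix.posSemidef_conjTranspose_mul_self B).sqrt) :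
    (Complex.I • ((U * hpsd.sqrt)ᴴ * (U * hpsd.sqrt))
        = Complex.I • (Bᴴ * B - (lam : ℂ) • (1 : Matrix (Fin 2) (Fin 2) ℂ))) ∧
    (∀ g h : Matrix (Fin 2) (Fin 2) ℂ,
      g ∈ Matrix.unitaryGroup (Fin 2) ℂ → h ∈ Matrix.unitaryGroup (Fin 2) ℂ →
      g.det = 1 → h.det = 1 → Bᴴ * B ≠ 1 →
      (g * B * hᴴ = B ↔ g * (U * hpsd.sqrt) * hᴴ = U * hpsd.sqrt)) ∧
    (B ∈ Matrix.unitaryGroup (Fin 2) ℂ → U * hpsd.sqrt = 0) :=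
  stmt10_general B hB lam hex hpsd U hU hpolar
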